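/- Bisimulation transfer property, backward direction (intermediate claim in the proof of Enforcement Transparency): let φ ∈ SHMLnf be closed and guarded and suppose p ∈ ⟦φ⟧. If ⟦φ⟧e[p] -μ-> s' for some μ ∈ Act ∪ {τ}, then there exist a system p' and a closed formula ψ ∈ SHMLnf such that p -μ-> p', s' = ⟦ψ⟧e[p'] and p' ∈ ⟦ψ⟧. -/

import Mathlib

set_option autoImplicit false

/-- A labelled transition system over observable actions `Act`;
`none` plays the role of the silent action τ. -/
structure LTS (Act : Type) where
  S : Type
  Tr : S → Option Act → S → Prop

namespace Enf

open scoped Classical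

variable {Act : Type}

/-- Zero or more silent steps. -/
def TauStar (L : LTS Act) : L.S → L.S → Prop :=
  Relation.ReflTransGen (fun p q => L.Tr p none q)

/-- The weak transition `p =a=> q`. -/
def WStep (L : LTS Act) (p : L.S) (a : Act) (q : L.S) : Prop :=
  ∃ p₁ p₂, TauStar L p p₁ ∧ L.Tr p₁ (some a) p₂ ∧ TauStar L p₂ q

/-- Weak trace `p =t=> q`. -/
inductive WTrace (L : LTS Act) : L.S → List Act → L.S → Prop
  | nil {p q : L.S} : TauStar L p q → WTrace L p [] q
  | cons {p r q : L.S} {a : Act} {t : List Act} :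
      WStep L p a r → WTrace L r t q → WTrace L p (a :: t) q

/-- SHML formulas: truth, falsehood, fixpoint variables, finite conjunctions,
modalities `[η]φ` (a guard set of actions together with an action-indexed
continuation, representing the symbolic action and the matching substitutions),
and greatest fixpoints. -/
inductive Frm (Act : Type) : Type where
  | tt : Frm Act
  | ff : Frm Act
  | var : ℕ → Frm Act
  | conj : (n : ℕ) → (Fin n → Frm Act) → Frm Act
  | box : Set Act → (Act → Frm Act) → Frm Act
  | max : ℕ → Frm Act → Frm Act

namespace Frm

/-- Free fixpoint variables. -/
def fv : Frm Act → Set ℕ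
  | .tt => ∅
  | .ff => ∅
  | .var X => {X}
  | .conj _ f => ⋃ i, fv (f i)
  | .box G k => ⋃ a ∈ G, fv (k a)
  | .max X φ => fv φ \ {X}

def Closed (φ : Frm Act) : Prop := fv φ = ∅

/-- Substitution `φ[ψ/X]` (of a closed formula `ψ`). -/
def subst : Frm Act → ℕ → Frm Act → Frm Act
  | .tt, _, _ => .tt
  | .ff, _, _ => .ff
  | .var Y, X, ψ => if Y = X then ψ else .var Y
  | .conj n f, X, ψ => .conj n (fun i => subst (f i) X ψ)
  | .box G k, X, ψ => .box G (fun a => subst (k a) X ψ)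
  | .max Y φ, X, ψ => if Y = X then .max Y φ else .max Y (subst φ X ψ)

/-- The normal-form fragment SHMLnf: conjunctions are conjunctions of
modalities with pairwise-disjoint guards, and each greatest fixpoint binds a
variable occurring free in its body. -/
inductive IsNF : Frm Act → Prop
  | tt : IsNF .tt
  | ff : IsNF .ff
  | var (X : ℕ) : IsNF (.var X)
  | conj (n : ℕ) (G : Fin n → Set Act) (k : Fin n → Act → Frm Act)
      (hdisj : ∀ i j : Fin n, i ≠ j → ∀ a : Act, a ∈ G i → a ∉ G j)
      (hk : ∀ i : Fin n, ∀ a ∈ G i, IsNF (k i a)) :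
      IsNF (.conj n fun i => .box (G i) (k i))
  | max (X : ℕ) (φ : Frm Act) (hfree : X ∈ fv φ) (hφ : IsNF φ) : IsNF (.max X φ)

/-- `gvar X φ`: the variable `X` does not occur unguarded (i.e. outside every
modality) in `φ`. -/
def gvar (X : ℕ) : Frm Act → Prop
  | .tt => True
  | .ff => True
  | .var Y => Y ≠ X
  | .conj _ f => ∀ i, gvar X (f i)
  | .box _ _ => True
  | .max Y φ => Y = X ∨ gvar X φ

/-- A formula is guarded if every occurrence of a fixpoint variable lies
beneath a modality. -/
def Guarded : Frm Act → Prop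
  | .tt => True
  | .ff => True
  | .var _ => True
  | .conj _ f => ∀ i, Guarded (f i)
  | .box G k => ∀ a ∈ G, Guarded (k a)
  | .max X φ => gvar X φ ∧ Guarded φ

/-- Number of top-level greatest-fixpoint binders. -/
def topMax : Frm Act → ℕ
  | .max _ φ => topMax φ + 1
  | _ => 0

end Frm

/-- Denotational semantics of (possibly open) formulas, relative to an
environment mapping fixpoint variables to sets of states; `max` is interpreted
as the greatest fixpoint of the induced monotone map. -/
def sem (L : LTS Act) : Frm Act → (ℕ → Set L.S) → Set L.S
  | .tt, _ => Set.univ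
  | .ff, _ => ∅
  | .var X, ρ => ρ X
  | .conj _ f, ρ => ⋂ i, sem L (f i) ρ
  | .box G k, ρ => {p | ∀ a ∈ G, ∀ q, WStep L p a q → q ∈ sem L (k a) ρ}
  | .max X φ, ρ => ⋃₀ {S | S ⊆ sem L φ (Function.update ρ X S)}

/-- Semantics of closed formulas. -/
def Sem (L : LTS Act) (φ : Frm Act) : Set L.S := sem L φ fun _ => ∅

/-- Satisfiability. -/
def SatIn (L : LTS Act) (φ : Frm Act) : Prop := (Sem L φ).Nonempty

/-- The violation relation `p ⊨v^t φ`, defined as the least relation closed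
under the given rules. -/
inductive Viol (L : LTS Act) : L.S → List Act → Frm Act → Prop
  | ff (p : L.S) : Viol L p [] .ff
  | conj {p : L.S} {t : List Act} {n : ℕ} {f : Fin n → Frm Act} (j : Fin n) :
      Viol L p t (f j) → Viol L p t (.conj n f)
  | box {p p' : L.S} {t : List Act} {a : Act} {G : Set Act} {k : Act → Frm Act} :
      a ∈ G → WStep L p a p' → Viol L p' t (k a) → Viol L p (a :: t) (.box G k)
  | max {p : L.S} {t : List Act} {X : ℕ} {φ : Frm Act} :
      Viol L p t (Frm.subst φ X (.max X φ)) → Viol L p t (.max X φ)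

/-- Transducers (enforcement monitors): identity, symbolic transformation
prefixes (a guard set of extended input actions, with `none` standing for the
insertion pattern •, an output per matched input, with `none` standing for τ,
and a continuation per matched input), finite selections, recursion, and
recursion variables. -/
inductive Trn (Act : Type) : Type where
  | id : Trn Act
  | prf : Set (Option Act) → (Option Act → Option Act) → (Option Act → Trn Act) → Trn Act
  | sel : (n : ℕ) → (Fin n → Trn Act) → Trn Act
  | fix : ℕ → Trn Act → Trn Act
  | var : ℕ → Trn Act

namespace Trn

def tsubst : Trn Act → ℕ → Trn Act → Trn Act
  | .id, _, _ => .id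
  | .prf G out k, x, s => .prf G out fun γ => tsubst (k γ) x s
  | .sel n f, x, s => .sel n fun i => tsubst (f i) x s
  | .fix y e, x, s => if y = x then .fix y e else .fix y (tsubst e x s)
  | .var y, x, s => if y = x then s else .var y

end Trn

/-- Transducer transitions: labels are pairs (input, output) where input
`none` is the insertion pattern • and output `none` is τ. -/
inductive TStep : Trn Act → Option Act × Option Act → Trn Act → Prop
  | id (a : Act) : TStep .id (some a, some a) .id
  | prf {G : Set (Option Act)} {out : Option Act → Option Act}
      {k : Option Act → Trn Act} {γ : Option Act} (h : γ ∈ G) :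
      TStep (.prf G out k) (γ, out γ) (k γ)
  | sel {n : ℕ} {f : Fin n → Trn Act} {l : Option Act × Option Act}
      {e' : Trn Act} (i : Fin n) (h : TStep (f i) l e') :
      TStep (.sel n f) l e'
  | fix {x : ℕ} {e : Trn Act} {l : Option Act × Option Act} {e' : Trn Act}
      (h : TStep (Trn.tsubst e x (.fix x e)) l e') :
      TStep (.fix x e) l e'

/-- Instrumentation of a transducer on a system. -/
inductive IStep (L : LTS Act) : Trn Act × L.S → Option Act → Trn Act × L.S → Prop
  | trn {e e' : Trn Act} {p p' : L.S} {a : Act} {μ : Option Act} :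
      L.Tr p (some a) p' → TStep e (some a, μ) e' → IStep L (e, p) μ (e', p')
  | asy {e : Trn Act} {p p' : L.S} :
      L.Tr p none p' → IStep L (e, p) none (e, p')
  | ins {e e' : Trn Act} {p : L.S} {μ : Option Act} :
      TStep e (none, μ) e' → IStep L (e, p) μ (e', p)
  | ter {e : Trn Act} {p p' : L.S} {a : Act} :
      L.Tr p (some a) p' →
      (∀ μ e', ¬ TStep e (some a, μ) e') →
      (∀ μ e', ¬ TStep e (none, μ) e') →
      IStep L (e, p) (some a) (Trn.id, p')

/-- The LTS of monitored systems `e[p]`. -/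
def instLTS (L : LTS Act) : LTS Act := ⟨Trn Act × L.S, IStep L⟩

/-- Strong bisimulations between (the state spaces of) two LTSs. -/
def IsBisim (L₁ L₂ : LTS Act) (R : L₁.S → L₂.S → Prop) : Prop :=
  ∀ s r, R s r →
    (∀ μ s', L₁.Tr s μ s' → ∃ r', L₂.Tr r μ r' ∧ R s' r') ∧
    (∀ μ r', L₂.Tr r μ r' → ∃ s', L₁.Tr s μ s' ∧ R s' r')

/-- Strong bisimilarity. -/
def Bisim (L₁ L₂ : LTS Act) (s : L₁.S) (r : L₂.S) : Prop :=
  ∃ R, IsBisim L₁ L₂ R ∧ R s r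

/-- The synthesis function `⟦-⟧e` from SHMLnf formulas to transducers:
formula variable `X` becomes monitor variable `X+1`; `tt` and `ff` become the
identity monitor; `max X.φ` becomes the corresponding recursive monitor; and a
normalised conjunction of modalities becomes a recursive selection (on the
fresh variable `0`) of symbolic prefixes that suppress (output τ, continue as
the recursion variable) actions whose continuation formula is `ff` and pass
through all other matched actions, continuing with the synthesis of the
respective continuation formula. -/
noncomputable def synth : Frm Act → Trn Act
  | .tt => .id
  | .ff => .id
  | .var X => .var (X + 1)
  | .max X φ => .fix (X + 1) (synth φ)
  | .box G k =>
      .prf {γ | ∃ a ∈ G, γ = some a}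
        (fun γ =>
          match γ with
          | some a => if k a = Frm.ff then none else some a
          | none => none)
        (fun γ =>
          match γ with
          | some a => if k a = Frm.ff then Trn.var 0 else synth (k a)
          | none => .id)
  | .conj n f => .fix 0 (.sel n fun i => synth (f i))

/-- Fuelled residual function (the fuel is consumed by fixpoint unfoldings;
on guarded closed SHMLnf formulas `topMax φ + 1` units of fuel suffice). -/
noncomputable def afterFuel : ℕ → Frm Act → Act → Frm Act
  | 0, _, _ => .tt
  | n + 1, φ, a =>
    match φ with
    | .max X ψ => afterFuel n (Frm.subst ψ X (.max X ψ)) a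
    | .conj m f =>
        if h : ∃ i : Fin m, ∃ G : Set Act, ∃ k : Act → Frm Act,
            f i = Frm.box G k ∧ a ∈ G
        then h.choose_spec.choose_spec.choose a
        else .tt
    | ψ => ψ

/-- The residual `after(φ, a)` of a guarded closed SHMLnf formula. -/
noncomputable def after (φ : Frm Act) (a : Act) : Frm Act :=
  afterFuel (Frm.topMax φ + 1) φ a

/-- Satisfaction relations (the coinductive rules of `⊨s`). -/
def IsSatRel (L : LTS Act) (R : L.S → Frm Act → Prop) : Prop :=
  (∀ p, ¬ R p .ff) ∧
  (∀ p (n : ℕ) (f : Fin n → Frm Act), R p (.conj n f) → ∀ i, R p (f i)) ∧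
  (∀ p (G : Set Act) (k : Act → Frm Act), R p (.box G k) →
      ∀ a ∈ G, ∀ q, WStep L p a q → R q (k a)) ∧
  (∀ p (X : ℕ) (φ : Frm Act), R p (.max X φ) → R p (Frm.subst φ X (.max X φ)))

/-- The largest satisfaction relation `⊨s`. -/
def SatCo (L : LTS Act) (p : L.S) (φ : Frm Act) : Prop :=
  ∃ R, IsSatRel L R ∧ R p φ


/-!
Satisfaction of a formula is preserved by silent steps of the system, because modalities
quantify over weak transitions; for a greatest fixpoint the τ-closure of the fixpoint is again
a post-fixpoint. A visible transition of `synth φ` has a finite derivation, so after finitely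
many unfoldings of greatest fixpoints (which change neither the semantics nor, by
`synth_subst`, the monitor) it is a transition of the prefix for `a` in a conjunction of
modalities `⋀ᵢ [Gᵢ] kᵢ`. That prefix suppresses `a` only if `kᵢ a = ff`, which `p ∈ ⟦φ⟧`
rules out once `p` performs `a`; otherwise it continues as `synth (kᵢ a)` and `p' ∈ ⟦kᵢ a⟧`.
-/

section

variable {L : LTS Act}

def TauClosed (L : LTS Act) (S : Set L.S) : Prop :=
  ∀ ⦃p q⦄, TauStar L p q → p ∈ S → q ∈ S

lemma WStep.of_tr {p q : L.S} {a : Act} (h : L.Tr p (some a) q) : WStep L p a q :=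
  ⟨p, q, .refl, h, .refl⟩

lemma WStep.tauStar_trans {p p' q : L.S} {a : Act} (hpp' : TauStar L p p')
    (h : WStep L p' a q) : WStep L p a q := by
  obtain ⟨p₁, p₂, h₁, h₂, h₃⟩ := h
  exact ⟨p₁, p₂, hpp'.trans h₁, h₂, h₃⟩

lemma sem_mono_fv : ∀ (φ : Frm Act) {ρ ρ' : ℕ → Set L.S},
    (∀ X ∈ φ.fv, ρ X ⊆ ρ' X) → sem L φ ρ ⊆ sem L φ ρ'
  | .tt, _, _, _ => le_rfl
  | .ff, _, _, _ => le_rfl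
  | .var X, _, _, h => h X rfl
  | .conj n f, _, _, h => Set.iInter_mono fun i =>
      sem_mono_fv (f i) fun X hX => h X (Set.mem_iUnion.2 ⟨i, hX⟩)
  | .box G k, _, _, h => fun _ hp a ha q hq =>
      sem_mono_fv (k a) (fun X hX => h X (Set.mem_biUnion ha hX)) (hp a ha q hq)
  | .max X φ, ρ, ρ', h => fun _ ⟨S, hS, hp⟩ => ⟨S, hS.trans <|
      sem_mono_fv φ fun Z hZ => by
        rcases eq_or_ne Z X with rfl | hne
        · simp
        · simpa [Function.update_apply, hne] using h Z ⟨hZ, hne⟩, hp⟩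

lemma sem_mono (φ : Frm Act) {ρ ρ' : ℕ → Set L.S} (h : ρ ≤ ρ') : sem L φ ρ ⊆ sem L φ ρ' :=
  sem_mono_fv φ fun X _ => h X

lemma sem_congr_fv (φ : Frm Act) {ρ ρ' : ℕ → Set L.S} (h : ∀ X ∈ φ.fv, ρ X = ρ' X) :
    sem L φ ρ = sem L φ ρ' :=
  (sem_mono_fv φ fun X hX => (h X hX).le).antisymm (sem_mono_fv φ fun X hX => (h X hX).ge)

lemma sem_closed (φ : Frm Act) (hφ : φ.Closed) (ρ ρ' : ℕ → Set L.S) :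
    sem L φ ρ = sem L φ ρ' :=
  sem_congr_fv φ fun _ hX => ((show φ.fv = ∅ from hφ) ▸ hX).elim

def semMaxMap (φ : Frm Act) (X : ℕ) (ρ : ℕ → Set L.S) : Set L.S →o Set L.S :=
  ⟨fun S => sem L φ (Function.update ρ X S), fun _ _ h => sem_mono φ (Function.update_mono h)⟩

lemma sem_max_eq_gfp (X : ℕ) (φ : Frm Act) (ρ : ℕ → Set L.S) :
    sem L (.max X φ) ρ = (semMaxMap φ X ρ).gfp :=
  (Set.sSup_eq_sUnion _).symm

lemma sem_max_fix (X : ℕ) (φ : Frm Act) (ρ : ℕ → Set L.S) :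
    sem L (.max X φ) ρ = sem L φ (Function.update ρ X (sem L (.max X φ) ρ)) := by
  rw [sem_max_eq_gfp]
  exact (semMaxMap φ X ρ).map_gfp.symm

lemma tauClosed_sem : ∀ (φ : Frm Act) {ρ : ℕ → Set L.S}, (∀ X, TauClosed L (ρ X)) →
    TauClosed L (sem L φ ρ)
  | .tt, _, _ => fun _ _ _ _ => trivial
  | .ff, _, _ => fun _ _ _ hp => hp
  | .var X, _, hρ => hρ X
  | .conj n f, _, hρ => fun _ _ hpq hp =>
      Set.mem_iInter.2 fun i => tauClosed_sem (f i) hρ hpq (Set.mem_iInter.1 hp i)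
  | .box G k, _, _ => fun _ _ hpq hp a ha r hr => hp a ha r (WStep.tauStar_trans hpq hr)
  | .max X φ, ρ, hρ => by
      -- the τ-closure `T'` of the greatest fixpoint `T` is a post-fixpoint, hence contained in `T`
      set T := sem L (.max X φ) ρ with hT
      set T' : Set L.S := {q | ∃ p ∈ T, TauStar L p q}
      have hT' : TauClosed L T' := fun _ _ hqr ⟨p, hp, hpq⟩ => ⟨p, hp, hpq.trans hqr⟩
      have hpost : T' ≤ semMaxMap φ X ρ T' := by
        rintro q ⟨p, hp, hpq⟩
        have hclosed : TauClosed L (sem L φ (Function.update ρ X T')) :=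
          tauClosed_sem φ ((Function.forall_update_iff ρ (p := fun _ S => TauClosed L S)).2
            ⟨hT', fun Y _ => hρ Y⟩)
        rw [hT, sem_max_fix] at hp
        have hTT' : T ⊆ T' := fun r hr => ⟨r, hr, .refl⟩
        exact hclosed hpq (sem_mono φ (Function.update_mono hTT') hp)
      have hT'T : T' ⊆ T := by
        rw [hT, sem_max_eq_gfp]
        exact OrderHom.le_gfp _ hpost
      exact fun p q hpq hp => hT'T ⟨p, hp, hpq⟩

lemma tauClosed_Sem (φ : Frm Act) : TauClosed L (Sem L φ) :=
  tauClosed_sem φ fun _ _ _ _ hp => hp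

lemma sem_subst {χ : Frm Act} (hχ : χ.Closed) :
    ∀ (φ : Frm Act) (X : ℕ) (ρ : ℕ → Set L.S),
      sem L (φ.subst X χ) ρ = sem L φ (Function.update ρ X (sem L χ ρ))
  | .tt, _, _ => rfl
  | .ff, _, _ => rfl
  | .var Y, X, ρ => by
      rcases eq_or_ne Y X with rfl | hne
      · simp [Frm.subst, sem]
      · simp [Frm.subst, sem, hne]
  | .conj n f, X, ρ => Set.iInter_congr fun i => sem_subst hχ (f i) X ρ
  | .box G k, X, ρ => by
      simp only [Frm.subst, sem, sem_subst hχ (k _) X ρ]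
  | .max Y φ, X, ρ => by
      rcases eq_or_ne Y X with rfl | hne
      · simp only [Frm.subst, ↓reduceIte]
        refine sem_congr_fv _ fun Z hZ => ?_
        exact (Function.update_of_ne hZ.2 _ _).symm
      · simp only [Frm.subst, if_neg hne, sem]
        congr! 3 with S
        rw [sem_subst hχ φ X, sem_closed χ hχ _ ρ, Function.update_comm hne]

lemma Sem_max_eq_Sem_subst {X : ℕ} {φ : Frm Act} (hc : (Frm.max X φ).Closed) :
    Sem L (.max X φ) = Sem L (φ.subst X (.max X φ)) := by
  rw [Sem, Sem, sem_subst hc, ← sem_max_fix]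

namespace Frm

lemma fv_subst_subset {X : ℕ} {χ : Frm Act} :
    ∀ φ : Frm Act, (φ.subst X χ).fv ⊆ φ.fv \ {X} ∪ χ.fv
  | .tt => Set.empty_subset _
  | .ff => Set.empty_subset _
  | .var Y => by
      rcases eq_or_ne Y X with rfl | hne
      · simp [subst]
      · simp [subst, fv, hne]
  | .conj n f => Set.iUnion_subset fun i => (fv_subst_subset (f i)).trans
      (Set.union_subset_union_left _
        (Set.sdiff_subset_sdiff_left (Set.subset_iUnion_of_subset i le_rfl)))
  | .box G k => Set.iUnion₂_subset fun a ha => (fv_subst_subset (k a)).trans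
      (Set.union_subset_union_left _
        (Set.sdiff_subset_sdiff_left (Set.subset_biUnion_of_mem (u := fun a => (k a).fv) ha)))
  | .max Y φ => by
      rcases eq_or_ne Y X with rfl | hne
      · simp only [subst, ↓reduceIte]
        exact fun Z hZ => Or.inl ⟨hZ, hZ.2⟩
      · simp only [subst, if_neg hne, fv]
        intro Z ⟨hZ, hZY⟩
        rcases fv_subst_subset φ hZ with ⟨hZφ, hZX⟩ | hZχ
        · exact Or.inl ⟨⟨hZφ, hZY⟩, hZX⟩
        · exact Or.inr hZχ

lemma fv_diff_subset_fv_subst {X : ℕ} {χ : Frm Act} :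
    ∀ φ : Frm Act, φ.fv \ {X} ⊆ (φ.subst X χ).fv
  | .tt => Set.sdiff_subset
  | .ff => Set.sdiff_subset
  | .var Y => by
      rintro Z ⟨rfl, hZX⟩
      simp [subst, fv, show Z ≠ X from hZX]
  | .conj n f => by
      rintro Z ⟨hZ, hZX⟩
      obtain ⟨i, hi⟩ := Set.mem_iUnion.1 hZ
      exact Set.mem_iUnion.2 ⟨i, fv_diff_subset_fv_subst (f i) ⟨hi, hZX⟩⟩
  | .box G k => by
      rintro Z ⟨hZ, hZX⟩
      obtain ⟨a, ha, hi⟩ := Set.mem_iUnion₂.1 hZ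
      exact Set.mem_iUnion₂.2 ⟨a, ha, fv_diff_subset_fv_subst (k a) ⟨hi, hZX⟩⟩
  | .max Y φ => by
      rintro Z ⟨⟨hZ, hZY⟩, hZX⟩
      rcases eq_or_ne Y X with rfl | hne
      · simpa [subst] using ⟨hZ, hZY⟩
      · simp only [subst, if_neg hne]
        exact ⟨fv_diff_subset_fv_subst φ ⟨hZ, hZX⟩, hZY⟩

lemma closed_subst_max {X : ℕ} {φ : Frm Act} (hc : (max X φ).Closed) :
    (φ.subst X (max X φ)).Closed :=
  have h : φ.fv \ {X} = ∅ := hc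
  Set.subset_empty_iff.1 <| (fv_subst_subset φ).trans (Set.union_subset h.subset h.subset)

lemma Closed.of_conj_box {n : ℕ} {G : Fin n → Set Act} {k : Fin n → Act → Frm Act}
    (hc : (conj n fun i => box (G i) (k i)).Closed) {i : Fin n} {a : Act} (ha : a ∈ G i) :
    (k i a).Closed :=
  Set.subset_empty_iff.1 <| hc ▸ Set.subset_iUnion_of_subset i
    (Set.subset_biUnion_of_mem (u := fun a => (k i a).fv) ha)

lemma IsNF.subst {X : ℕ} {χ : Frm Act} (hχ : χ.IsNF) {φ : Frm Act} (hφ : φ.IsNF) :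
    (φ.subst X χ).IsNF := by
  induction hφ with
  | tt => exact .tt
  | ff => exact .ff
  | var Y =>
    rcases eq_or_ne Y X with rfl | hne
    · simpa [Frm.subst] using hχ
    · simpa [Frm.subst, hne] using IsNF.var Y
  | conj n G k hdisj _ ih => exact .conj n G (fun i a => (k i a).subst X χ) hdisj ih
  | max Y φ hfree _ ih =>
    rcases eq_or_ne Y X with rfl | hne
    · simpa [Frm.subst] using IsNF.max Y φ hfree ‹_›
    · simpa [Frm.subst, hne] using
        IsNF.max Y _ (fv_diff_subset_fv_subst φ ⟨hfree, hne⟩) ih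

lemma subst_eq_ff_iff {χ : Frm Act} (hχ : χ ≠ .ff) {φ : Frm Act} {X : ℕ} :
    φ.subst X χ = .ff ↔ φ = .ff := by
  cases φ with
  | var Y => by_cases hY : Y = X <;> simp [subst, hY, hχ]
  | max Y ψ => by_cases hY : Y = X <;> simp [subst, hY]
  | _ => simp [subst]

end Frm

lemma tsubst_synth_zero {χ : Frm Act} (h : χ.IsNF) (F : Trn Act) :
    (synth χ).tsubst 0 F = synth χ := by
  induction h with
  | max X φ _ _ ih => simp [synth, Trn.tsubst, ih]
  | _ => simp [synth, Trn.tsubst]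

/-- `χ ≠ ff` is needed because the monitor of a modality depends on which of its continuations
are syntactically `ff`. -/
lemma synth_subst {χ : Frm Act} (hχ : χ ≠ .ff) :
    ∀ (φ : Frm Act) (X : ℕ), synth (φ.subst X χ) = (synth φ).tsubst (X + 1) (synth χ)
  | .tt, _ => rfl
  | .ff, _ => rfl
  | .var Y, X => by by_cases hY : Y = X <;> simp [Frm.subst, synth, Trn.tsubst, hY]
  | .conj n f, X => by
      simp [Frm.subst, synth, Trn.tsubst, synth_subst hχ (f _) X]
  | .box G k, X => by
      simp only [Frm.subst, synth, Trn.tsubst, Frm.subst_eq_ff_iff hχ]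
      congr 2 with γ
      rcases γ with _ | a
      · rfl
      · by_cases hk : k a = .ff <;> simp [hk, Trn.tsubst, synth_subst hχ (k a) X]
  | .max Y φ, X => by
      by_cases hY : Y = X <;> simp [Frm.subst, synth, Trn.tsubst, hY, synth_subst hχ φ X]

lemma tStep_synth_conj {n : ℕ} {G : Fin n → Set Act} {k : Fin n → Act → Frm Act}
    (hk : ∀ i, ∀ a ∈ G i, (k i a).IsNF) {ι μ : Option Act} {e' : Trn Act}
    (h : TStep (synth (.conj n fun i => .box (G i) (k i))) (ι, μ) e') :
    ∃ i, ∃ a ∈ G i, ι = some a ∧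
      (k i a = .ff ∧ μ = none ∨ k i a ≠ .ff ∧ μ = some a ∧ e' = synth (k i a)) := by
  obtain ⟨i, hi⟩ : ∃ i, TStep ((synth (.box (G i) (k i))).tsubst 0
      (synth (.conj n fun i => .box (G i) (k i)))) (ι, μ) e' := by
    cases h with | fix h => cases h with | sel i h => exact ⟨i, h⟩
  simp only [synth, Trn.tsubst] at hi
  cases hi with
  | prf hγ =>
    obtain ⟨a, ha, rfl⟩ := hγ
    refine ⟨i, a, ha, rfl, ?_⟩
    by_cases hff : k i a = .ff
    · simp [hff]
    · simp [hff, tsubst_synth_zero (hk i a ha)]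

/-- When the monitor suppresses `a`, the residual `ψ` is `ff`: then no state of `⟦φ⟧` can
perform `a`. -/
theorem tStep_synth {φ : Frm Act} (hc : φ.Closed) (hnf : φ.IsNF) {ι μ : Option Act}
    {e' : Trn Act} (h : TStep (synth φ) (ι, μ) e') :
    ∃ a, ι = some a ∧ ∃ ψ : Frm Act, ψ.Closed ∧ ψ.IsNF ∧
      (∀ p q, p ∈ Sem L φ → WStep L p a q → q ∈ Sem L ψ) ∧
      (μ = some a ∧ e' = synth ψ ∨ μ = none ∧ ψ = .ff) := by
  generalize he : synth φ = e, hl : (ι, μ) = l at h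
  induction h generalizing φ with
  | id b =>
    cases hl
    exact ⟨b, rfl, .tt, rfl, .tt, fun _ _ _ _ => trivial, .inl ⟨rfl, rfl⟩⟩
  | prf => cases hnf <;> cases he
  | sel => cases hnf <;> cases he
  | fix hstep ih =>
    cases hnf with
    | tt | ff | var => cases he
    | conj n G k _ hk =>
      cases he
      cases hl
      obtain ⟨i, a, ha, rfl, hout⟩ := tStep_synth_conj hk (.fix hstep)
      have hres : ∀ p q, p ∈ Sem L (.conj n fun i => .box (G i) (k i)) → WStep L p a q →
          q ∈ Sem L (k i a) :=
        fun p q hp hpq => Set.mem_iInter.1 hp i a ha q hpq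
      refine ⟨a, rfl, k i a, hc.of_conj_box ha, hk i a ha, hres, ?_⟩
      rcases hout with ⟨hff, rfl⟩ | ⟨_, rfl, rfl⟩
      · exact .inr ⟨rfl, hff⟩
      · exact .inl ⟨rfl, rfl⟩
    | max X ψ hfree hψ =>
      cases he
      rw [Sem_max_eq_Sem_subst hc]
      exact ih (Frm.closed_subst_max hc) ((Frm.IsNF.max X ψ hfree hψ).subst hψ)
        (synth_subst (fun h => by cases h) ψ X) hl

end

theorem transfer_backward_general (Act : Type) (L : LTS Act) (φ : Frm Act)
    (hclosed : φ.Closed) (hnf : φ.IsNF)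
    (p : L.S) (μ : Option Act) (s' : Trn Act × L.S)
    (hsat : p ∈ Sem L φ) (hstep : IStep L (synth φ, p) μ s') :
    ∃ (p' : L.S) (ψ : Frm Act), ψ.Closed ∧ ψ.IsNF ∧
      L.Tr p μ p' ∧ s' = (synth ψ, p') ∧ p' ∈ Sem L ψ := by
  cases hstep with
  | trn htr hT =>
    obtain ⟨a, ha, ψ, hψc, hψnf, hres, hout⟩ := tStep_synth hclosed hnf hT
    cases ha
    have hp' := hres p _ hsat (.of_tr htr)
    rcases hout with ⟨rfl, rfl⟩ | ⟨-, rfl⟩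
    · exact ⟨_, ψ, hψc, hψnf, htr, rfl, hp'⟩
    · exact hp'.elim
  | asy htr =>
    exact ⟨_, φ, hclosed, hnf, htr, rfl, tauClosed_Sem φ (.single htr) hsat⟩
  | ins hT =>
    obtain ⟨_, h, -⟩ := tStep_synth (L := L) hclosed hnf hT
    cases h
  | ter htr =>
    exact ⟨_, .tt, rfl, .tt, htr, rfl, trivial⟩

/-- bisimulation transfer property, backward direction: for
closed guarded SHMLnf φ with p ∈ ⟦φ⟧, if ⟦φ⟧e[p] -μ-> s' then there are a
system p' and a closed SHMLnf formula ψ with p -μ-> p', s' = ⟦ψ⟧e[p'] and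
p' ∈ ⟦ψ⟧. -/
theorem transfer_backward (Act : Type) (L : LTS Act) (φ : Frm Act)
    (hclosed : φ.Closed) (hnf : φ.IsNF) (hguard : φ.Guarded)
    (p : L.S) (μ : Option Act) (s' : Trn Act × L.S)
    (hsat : p ∈ Sem L φ) (hstep : IStep L (synth φ, p) μ s') :
    ∃ (p' : L.S) (ψ : Frm Act), ψ.Closed ∧ ψ.IsNF ∧
      L.Tr p μ p' ∧ s' = (synth ψ, p') ∧ p' ∈ Sem L ψ :=
  transfer_backward_general Act L φ hclosed hnf p μ s' hsat hstep

end Enf
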